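/- Let h be the 5-dimensional real Lie algebra with Maurer–Cartan relations dθ^1=0, dθ^2=-θ^1∧θ^2, dθ^3=θ^1∧θ^3, dθ^4=2θ^1∧θ^4, dθ^5=θ^2∧θ^3. Then H^2_{θ^1}(h) is two-dimensional, spanned by the classes of θ^1∧θ^2 and θ^2∧θ^5. -/

import Mathlib

open scoped BigOperators

/-- The space of real-valued `k`-cochains on `L` (as bare functions). -/
abbrev Cochain (L : Type*) (k : ℕ) := (Fin k → L) → ℝ

variable {L : Type*} [LieRing L] [LieAlgebra ℝ L]

/-- A cochain is an alternating multilinear map, i.e. an element of `Hom(Λ^k g, ℝ)`. -/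
def IsAltMap {k : ℕ} (θ : Cochain L k) : Prop :=
  ∃ f : AlternatingMap ℝ L ℝ (Fin k), ⇑f = θ

/-- The Chevalley–Eilenberg differential with trivial coefficients:
`(dθ)(X_0,…,X_k) = ∑_{p<q} (-1)^{p+q} θ([X_p,X_q],X_0,…,X̂_p,…,X̂_q,…,X_k)`. -/
def CEd : {k : ℕ} → Cochain L k → Cochain L (k + 1)
  | 0, _ => fun _ => 0
  | (k + 1), θ => fun X =>
      ∑ p : Fin (k + 2), ∑ q : Fin (k + 2),
        if h : (p : ℕ) < (q : ℕ) then
          ((-1 : ℝ) ^ ((p : ℕ) + (q : ℕ))) *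
            θ (Fin.cons ⁅X p, X q⁆
                (Fin.removeNth ⟨(p : ℕ), lt_of_lt_of_le h (Nat.lt_succ_iff.mp q.isLt)⟩
                  (Fin.removeNth q X)))
        else 0

/-- The wedge product `ω ∧ θ` of a 1-cochain with a `k`-cochain. -/
def oneWedge {k : ℕ} (ω : L → ℝ) (θ : Cochain L k) : Cochain L (k + 1) :=
  fun X => ∑ i : Fin (k + 1), ((-1 : ℝ) ^ (i : ℕ)) * ω (X i) * θ (Fin.removeNth i X)

/-- The deformed differential `d_{λω} θ = dθ + λ ω ∧ θ`. -/
def dDef {k : ℕ} (lam : ℝ) (ω : L → ℝ) (θ : Cochain L k) : Cochain L (k + 1) :=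
  CEd θ + lam • oneWedge ω θ

/-- The submodule of alternating multilinear `k`-cochains, i.e. `C^k(g,ℝ) = Hom(Λ^k g, ℝ)`. -/
def AltSub (L : Type*) [LieRing L] [LieAlgebra ℝ L] (k : ℕ) : Submodule ℝ (Cochain L k) where
  carrier := {θ | IsAltMap θ}
  add_mem' := by rintro θ₁ θ₂ ⟨f, rfl⟩ ⟨g, rfl⟩; exact ⟨f + g, rfl⟩
  zero_mem' := ⟨0, rfl⟩
  smul_mem' := by rintro c θ ⟨f, rfl⟩; exact ⟨c • f, rfl⟩

/-- The Chevalley–Eilenberg differential as a linear map. -/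
def CEdL (L : Type*) [LieRing L] [LieAlgebra ℝ L] (k : ℕ) :
    Cochain L k →ₗ[ℝ] Cochain L (k + 1) where
  toFun := CEd
  map_add' θ₁ θ₂ := by
    cases k with
    | zero => funext X; exact (zero_add (0:ℝ)).symm
    | succ k =>
      funext X
      show _ = CEd θ₁ X + CEd θ₂ X
      simp only [CEd, Pi.add_apply]
      rw [← Finset.sum_add_distrib]
      refine Finset.sum_congr rfl fun p _ => ?_
      rw [← Finset.sum_add_distrib]
      refine Finset.sum_congr rfl fun q _ => ?_
      split_ifs <;> simp [mul_add]
  map_smul' c θ := by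
    cases k with
    | zero => funext X; exact (smul_zero c).symm
    | succ k =>
      funext X
      show _ = c * CEd θ X
      simp only [CEd, Pi.smul_apply, smul_eq_mul]
      rw [Finset.mul_sum]
      refine Finset.sum_congr rfl fun p _ => ?_
      rw [Finset.mul_sum]
      refine Finset.sum_congr rfl fun q _ => ?_
      split_ifs with h
      · ring
      · exact (mul_zero c).symm

/-- The operator `θ ↦ ω ∧ θ` as a linear map. -/
def oneWedgeL (L : Type*) [LieRing L] [LieAlgebra ℝ L] (ω : L → ℝ) (k : ℕ) :
    Cochain L k →ₗ[ℝ] Cochain L (k + 1) where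
  toFun := oneWedge ω
  map_add' θ₁ θ₂ := by
    funext X
    simp [oneWedge, mul_add, Finset.sum_add_distrib]
  map_smul' c θ := by
    funext X
    simp only [oneWedge, Pi.smul_apply, smul_eq_mul, RingHom.id_apply]
    rw [Finset.mul_sum]
    exact Finset.sum_congr rfl fun i _ => by ring

/-- The deformed differential `d_{λω}` as a linear map. -/
noncomputable def dDefL (L : Type*) [LieRing L] [LieAlgebra ℝ L]
    (lam : ℝ) (ω : L → ℝ) (k : ℕ) : Cochain L k →ₗ[ℝ] Cochain L (k + 1) :=
  CEdL L k + lam • oneWedgeL L ω k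

/-- Deformed `k`-cocycles: alternating cochains with `d_{λω} θ = 0`. -/
noncomputable def Zdef (L : Type*) [LieRing L] [LieAlgebra ℝ L]
    (lam : ℝ) (ω : L → ℝ) (k : ℕ) : Submodule ℝ (Cochain L k) :=
  AltSub L k ⊓ LinearMap.ker (dDefL L lam ω k)

/-- Deformed `(k+1)`-coboundaries: images under `d_{λω}` of alternating `k`-cochains. -/
noncomputable def Bdef (L : Type*) [LieRing L] [LieAlgebra ℝ L]
    (lam : ℝ) (ω : L → ℝ) (k : ℕ) : Submodule ℝ (Cochain L (k + 1)) :=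
  Submodule.map (dDefL L lam ω k) (AltSub L k)

/-- The deformed cohomology `H^{k+1}_{λω}(g)` = closed forms modulo exact forms. -/
noncomputable abbrev Hdef (L : Type*) [LieRing L] [LieAlgebra ℝ L]
    (lam : ℝ) (ω : L → ℝ) (k : ℕ) :=
  Zdef L lam ω (k + 1) ⧸
    Submodule.comap (Zdef L lam ω (k + 1)).subtype (Bdef L lam ω k)

/-- The 1-cochain associated to a linear functional. -/
def c1 {L : Type*} (f : L → ℝ) : Cochain L 1 := fun X => f (X 0)

/-- The wedge product `f ∧ g` of two 1-forms, as a 2-cochain. -/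
def w2 {L : Type*} (f g : L → ℝ) : Cochain L 2 :=
  fun X => f (X 0) * g (X 1) - f (X 1) * g (X 0)

/-! On 1-forms, `d_{θ^1} θ^1 = d_{θ^1} θ^2 = 0`, `d_{θ^1} θ^3 = 2 θ^1∧θ^3`,
`d_{θ^1} θ^4 = 3 θ^1∧θ^4` and `d_{θ^1} θ^5 = θ^1∧θ^5 + θ^2∧θ^3`. Evaluating the cocycle condition
of a closed 2-form `θ` on five basis triples shows that `θ` is a combination of these
coboundaries and of `θ^1∧θ^2`, `θ^2∧θ^5`, so `θ` is exact iff `θ(X_1, X_2) = θ(X_2, X_5) = 0`.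
Evaluation at these two pairs thus identifies `H^2_{θ^1}(h)` with `ℝ²`, sending the classes of
`θ^1∧θ^2` and `θ^2∧θ^5` to the standard basis. -/

theorem CEd_one_apply {L : Type*} [LieRing L] (θ : Cochain L 1) (X : Fin 2 → L) :
    CEd θ X = -θ ![⁅X 0, X 1⁆] := by
  have h : Fin.cons ⁅X 0, X 1⁆ (Fin.tail (Fin.removeNth 1 X)) = ![⁅X 0, X 1⁆] := by
    ext i; fin_cases i; rfl
  simp [CEd, Fin.sum_univ_two, h]

theorem CEd_two_apply {L : Type*} [LieRing L] (θ : Cochain L 2) (X : Fin 3 → L) :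
    CEd θ X = -θ ![⁅X 0, X 1⁆, X 2] + θ ![⁅X 0, X 2⁆, X 1] - θ ![⁅X 1, X 2⁆, X 0] := by
  have h01 : Fin.cons ⁅X 0, X 1⁆ (Fin.tail (Fin.removeNth 1 X)) = ![⁅X 0, X 1⁆, X 2] := by
    ext i; fin_cases i <;> rfl
  have h02 : Fin.cons ⁅X 0, X 2⁆ (Fin.tail (Fin.removeNth 2 X)) = ![⁅X 0, X 2⁆, X 1] := by
    ext i; fin_cases i <;> rfl
  have h12 : Fin.cons ⁅X 1, X 2⁆ (Fin.removeNth 1 (Fin.removeNth 2 X)) = ![⁅X 1, X 2⁆, X 0] := by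
    ext i; fin_cases i <;> rfl
  simp [CEd, Fin.sum_univ_three, h01, h02, h12]
  ring

theorem oneWedge_one_apply {L : Type*} (ω : L → ℝ) (θ : Cochain L 1) (X : Fin 2 → L) :
    oneWedge ω θ X = ω (X 0) * θ ![X 1] - ω (X 1) * θ ![X 0] := by
  have h0 : Fin.tail X = ![X 1] := by ext i; fin_cases i; rfl
  have h1 : Fin.removeNth 1 X = ![X 0] := by ext i; fin_cases i; rfl
  simp [oneWedge, Fin.sum_univ_two, h0, h1]
  ring

theorem oneWedge_two_apply {L : Type*} (ω : L → ℝ) (θ : Cochain L 2) (X : Fin 3 → L) :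
    oneWedge ω θ X =
      ω (X 0) * θ ![X 1, X 2] - ω (X 1) * θ ![X 0, X 2] + ω (X 2) * θ ![X 0, X 1] := by
  have h0 : Fin.tail X = ![X 1, X 2] := by ext i; fin_cases i <;> rfl
  have h1 : Fin.removeNth 1 X = ![X 0, X 2] := by ext i; fin_cases i <;> rfl
  have h2 : Fin.removeNth 2 X = ![X 0, X 1] := by ext i; fin_cases i <;> rfl
  simp [oneWedge, Fin.sum_univ_three, h0, h1, h2]
  ring

theorem dDefL_one_apply (lam : ℝ) (ω : L → ℝ) (θ : Cochain L 1) (X : Fin 2 → L) :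
    dDefL L lam ω 1 θ X =
      -θ ![⁅X 0, X 1⁆] + lam * (ω (X 0) * θ ![X 1] - ω (X 1) * θ ![X 0]) := by
  change CEd θ X + lam * oneWedge ω θ X = _
  rw [CEd_one_apply, oneWedge_one_apply]

theorem dDefL_two_apply (lam : ℝ) (ω : L → ℝ) (θ : Cochain L 2) (X : Fin 3 → L) :
    dDefL L lam ω 2 θ X =
      -θ ![⁅X 0, X 1⁆, X 2] + θ ![⁅X 0, X 2⁆, X 1] - θ ![⁅X 1, X 2⁆, X 0] +
        lam * (ω (X 0) * θ ![X 1, X 2] - ω (X 1) * θ ![X 0, X 2] + ω (X 2) * θ ![X 0, X 1]) := by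
  change CEd θ X + lam * oneWedge ω θ X = _
  rw [CEd_two_apply, oneWedge_two_apply]

section AlternatingForms

variable {R M N : Type*} [CommRing R] [AddCommGroup M] [Module R M] [AddCommGroup N] [Module R N]

theorem AlternatingMap.map_vecCons_zero {n : ℕ} (f : M [⋀^Fin (n + 1)]→ₗ[R] N)
    (m : Fin n → M) : f (Matrix.vecCons 0 m) = 0 :=
  f.map_coord_zero 0 rfl

theorem AlternatingMap.apply_vecCons_neg (f : M [⋀^Fin 2]→ₗ[R] N) (x y : M) :
    f ![-x, y] = -f ![x, y] := by
  simpa using f.map_vecCons_smul ![y] (-1) x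

theorem AlternatingMap.apply_vecCons_swap (f : M [⋀^Fin 2]→ₗ[R] N) (x y : M) :
    f ![y, x] = -f ![x, y] := by
  convert f.map_swap ![x, y] (i := 0) (j := 1) (by decide) using 2
  ext i; fin_cases i <;> rfl

end AlternatingForms

theorem isAltMap_c1 (f : L →ₗ[ℝ] ℝ) : IsAltMap (c1 ⇑f) :=
  ⟨AlternatingMap.ofSubsingleton ℝ L ℝ 0 f, rfl⟩

/-- `f ∧ g` is the determinant of the `2 × 2` matrix `(f (X i), g (X i))`. -/
theorem isAltMap_w2 (f g : L →ₗ[ℝ] ℝ) : IsAltMap (w2 ⇑f ⇑g) := by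
  refine ⟨Matrix.detRowAlternating.compLinearMap (LinearMap.pi ![f, g]), funext fun X => ?_⟩
  change Matrix.det (Matrix.of fun i j => ![f, g] j (X i)) = _
  simp [Matrix.det_fin_two, w2]
  ring

theorem IsAltMap.ext_basis {ι : Type*} [LinearOrder ι] (E : Module.Basis ι ℝ L)
    {θ θ' : Cochain L 2} (hθ : IsAltMap θ) (hθ' : IsAltMap θ')
    (h : ∀ i j, i < j → θ ![E i, E j] = θ' ![E i, E j]) : θ = θ' := by
  obtain ⟨f, rfl⟩ := hθ
  obtain ⟨g, rfl⟩ := hθ'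
  congr 1
  refine E.ext_alternating fun v hv => ?_
  have hv2 : (fun i => E (v i)) = ![E (v 0), E (v 1)] := by ext i; fin_cases i <;> rfl
  rw [hv2]
  rcases lt_trichotomy (v 0) (v 1) with hlt | heq | hgt
  · exact h _ _ hlt
  · exact absurd (hv heq) (by decide)
  · rw [f.apply_vecCons_swap, g.apply_vecCons_swap, h _ _ hgt]

section QuotientByKernel

variable {R V W : Type*} [Ring R] [AddCommGroup V] [Module R V] [AddCommGroup W] [Module R W]

theorem LinearMap.range_eq_top_of_span_image_eq_top {Φ : V →ₗ[R] W} {s : Set V}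
    (hs : Submodule.span R (Φ '' s) = ⊤) : LinearMap.range Φ = ⊤ :=
  top_unique (hs ▸ Submodule.span_le.2 (Set.image_subset_range _ _))

theorem Submodule.span_image_mkQ_eq_top_of_ker_eq {N : Submodule R V} {Φ : V →ₗ[R] W}
    (hΦ : LinearMap.ker Φ = N) {s : Set V} (hs : span R (Φ '' s) = ⊤) :
    span R (N.mkQ '' s) = ⊤ := by
  apply map_injective_of_injective (LinearMap.ker_eq_bot.1 (N.ker_liftQ_eq_bot' Φ hΦ.symm))
  rw [map_span, ← Set.image_comp, map_top, range_liftQ,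
    LinearMap.range_eq_top_of_span_image_eq_top hs]
  exact hs

theorem Submodule.finrank_quotient_of_ker_eq {N : Submodule R V} {Φ : V →ₗ[R] W}
    (hΦ : LinearMap.ker Φ = N) {s : Set V} (hs : span R (Φ '' s) = ⊤) :
    Module.finrank R (V ⧸ N) = Module.finrank R W :=
  ((N.quotEquivOfEq _ hΦ.symm).trans (Φ.quotKerEquivOfSurjective
    (LinearMap.range_eq_top.1 (LinearMap.range_eq_top_of_span_image_eq_top hs)))).finrank_eq

end QuotientByKernel

section AlgebraH

variable {H : Type*} [LieRing H] [LieAlgebra ℝ H]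

/-- `E i` stands for the paper's `X_{i+1}`. -/
structure IsHBasis (E : Module.Basis (Fin 5) ℝ H) : Prop where
  b01 : ⁅E 0, E 1⁆ = E 1
  b02 : ⁅E 0, E 2⁆ = -E 2
  b03 : ⁅E 0, E 3⁆ = (-2 : ℝ) • E 3
  b12 : ⁅E 1, E 2⁆ = -E 4
  b04 : ⁅E 0, E 4⁆ = 0
  b13 : ⁅E 1, E 3⁆ = 0
  b14 : ⁅E 1, E 4⁆ = 0
  b23 : ⁅E 2, E 3⁆ = 0
  b24 : ⁅E 2, E 4⁆ = 0
  b34 : ⁅E 3, E 4⁆ = 0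

namespace IsHBasis

variable {E : Module.Basis (Fin 5) ℝ H}

theorem repr_lie (hE : IsHBasis E) (x y : H) :
    ⇑(E.repr ⁅x, y⁆) = ![0, E.repr x 0 * E.repr y 1 - E.repr x 1 * E.repr y 0,
      E.repr x 2 * E.repr y 0 - E.repr x 0 * E.repr y 2,
      2 * (E.repr x 3 * E.repr y 0 - E.repr x 0 * E.repr y 3),
      E.repr x 2 * E.repr y 1 - E.repr x 1 * E.repr y 2] := by
  have h : ⁅x, y⁆ = ∑ j, ∑ i, (E.repr y j * E.repr x i) • ⁅E i, E j⁆ := by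
    conv_lhs => rw [← E.sum_repr x, ← E.sum_repr y]
    simp only [sum_lie, lie_sum, smul_lie, lie_smul, Finset.smul_sum, smul_smul]
  rw [h]
  simp only [Fin.sum_univ_five, lie_self,
    ← lie_skew (E 1) (E 0), ← lie_skew (E 2) (E 0), ← lie_skew (E 3) (E 0), ← lie_skew (E 4) (E 0),
    ← lie_skew (E 2) (E 1), ← lie_skew (E 3) (E 1), ← lie_skew (E 4) (E 1),
    ← lie_skew (E 3) (E 2), ← lie_skew (E 4) (E 2), ← lie_skew (E 4) (E 3),
    hE.b01, hE.b02, hE.b03, hE.b04, hE.b12, hE.b13, hE.b14, hE.b23, hE.b24, hE.b34]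
  ext k
  fin_cases k <;> simp <;> ring

theorem w2_zero_one_mem_Zdef (hE : IsHBasis E) :
    w2 (E.repr · 0) (E.repr · 1) ∈ Zdef H 1 (E.repr · 0) 2 := by
  refine ⟨isAltMap_w2 (E.coord 0) (E.coord 1), ?_⟩
  ext X
  simp [dDefL_two_apply, w2, hE.repr_lie]
  ring

theorem w2_one_four_mem_Zdef (hE : IsHBasis E) :
    w2 (E.repr · 1) (E.repr · 4) ∈ Zdef H 1 (E.repr · 0) 2 := by
  refine ⟨isAltMap_w2 (E.coord 1) (E.coord 4), ?_⟩
  ext X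
  simp [dDefL_two_apply, w2, hE.repr_lie]
  ring

theorem apply_eq_zero_of_mem_Bdef (hE : IsHBasis E) {θ : Cochain H 2}
    (hθ : θ ∈ Bdef H 1 (E.repr · 0) 1) : θ ![E 0, E 1] = 0 ∧ θ ![E 1, E 4] = 0 := by
  obtain ⟨_, ⟨g, rfl⟩, rfl⟩ := hθ
  simp [dDefL_one_apply, hE.b01, hE.b14, g.map_vecCons_zero]

theorem cocycle_relations (hE : IsHBasis E) (f : H [⋀^Fin 2]→ₗ[ℝ] ℝ)
    (hf : dDefL H 1 (E.repr · 0) 2 f = 0) :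
    f ![E 1, E 2] = f ![E 0, E 4] ∧ f ![E 1, E 3] = 0 ∧ f ![E 2, E 3] = 0 ∧
      f ![E 2, E 4] = 0 ∧ f ![E 3, E 4] = 0 := by
  have h (X : Fin 3 → H) := congrFun hf X
  have h012 := h ![E 0, E 1, E 2]
  have h013 := h ![E 0, E 1, E 3]
  have h023 := h ![E 0, E 2, E 3]
  have h024 := h ![E 0, E 2, E 4]
  have h034 := h ![E 0, E 3, E 4]
  simp [dDefL_two_apply, hE.b01, hE.b02, hE.b03, hE.b04, hE.b12, hE.b13, hE.b23, hE.b24, hE.b34,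
    f.apply_vecCons_neg, f.map_vecCons_smul, f.map_vecCons_zero, f.apply_vecCons_swap (E 1) (E 2),
    f.apply_vecCons_swap (E 0) (E 4), f.apply_vecCons_swap (E 1) (E 3),
    f.apply_vecCons_swap (E 2) (E 3)] at h012 h013 h023 h024 h034
  refine ⟨?_, ?_, ?_, ?_, ?_⟩ <;> linarith

theorem dDefL_c1_two (hE : IsHBasis E) :
    dDefL H 1 (E.repr · 0) 1 (c1 (E.repr · 2)) = (2 : ℝ) • w2 (E.repr · 0) (E.repr · 2) := by
  ext X
  simp [dDefL_one_apply, c1, w2, hE.repr_lie]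
  ring

theorem dDefL_c1_three (hE : IsHBasis E) :
    dDefL H 1 (E.repr · 0) 1 (c1 (E.repr · 3)) = (3 : ℝ) • w2 (E.repr · 0) (E.repr · 3) := by
  ext X
  simp [dDefL_one_apply, c1, w2, hE.repr_lie]
  ring

theorem dDefL_c1_four (hE : IsHBasis E) :
    dDefL H 1 (E.repr · 0) 1 (c1 (E.repr · 4)) =
      w2 (E.repr · 0) (E.repr · 4) + w2 (E.repr · 1) (E.repr · 2) := by
  ext X
  simp [dDefL_one_apply, c1, w2, hE.repr_lie]
  ring

theorem mem_Bdef_of_mem_Zdef (hE : IsHBasis E) {θ : Cochain H 2}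
    (hθ : θ ∈ Zdef H 1 (E.repr · 0) 2) (h01 : θ ![E 0, E 1] = 0) (h14 : θ ![E 1, E 4] = 0) :
    θ ∈ Bdef H 1 (E.repr · 0) 1 := by
  obtain ⟨⟨f, rfl⟩, hf⟩ := hθ
  obtain ⟨r12, r13, r23, r24, r34⟩ := hE.cocycle_relations f hf
  have hc1 (k : Fin 5) : c1 (E.repr · k) ∈ AltSub H 1 := isAltMap_c1 (E.coord k)
  have hw2 (k l : Fin 5) : w2 (E.repr · k) (E.repr · l) ∈ AltSub H 2 :=
    isAltMap_w2 (E.coord k) (E.coord l)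
  refine ⟨(f ![E 0, E 2] / 2) • c1 (E.repr · 2) + (f ![E 0, E 3] / 3) • c1 (E.repr · 3) +
      f ![E 0, E 4] • c1 (E.repr · 4), ?_, ?_⟩
  · exact add_mem (add_mem (Submodule.smul_mem _ _ (hc1 2)) (Submodule.smul_mem _ _ (hc1 3)))
      (Submodule.smul_mem _ _ (hc1 4))
  simp only [map_add, map_smul, hE.dDefL_c1_two, hE.dDefL_c1_three, hE.dDefL_c1_four, smul_smul]
  refine IsAltMap.ext_basis E ?_ ⟨f, rfl⟩ fun i j hij => ?_
  · exact add_mem (add_mem (Submodule.smul_mem _ _ (hw2 0 2)) (Submodule.smul_mem _ _ (hw2 0 3)))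
      (Submodule.smul_mem _ _ (add_mem (hw2 0 4) (hw2 1 2)))
  · fin_cases i <;> fin_cases j <;> simp_all [w2]

end IsHBasis

end AlgebraH

/-- `H^2_{θ^1}(h)` is two-dimensional, spanned by the classes of
`θ^1∧θ^2` and `θ^2∧θ^5`. -/
theorem H2_deformed_one
    (H : Type*) [LieRing H] [LieAlgebra ℝ H] (E : Module.Basis (Fin 5) ℝ H)
    (b01 : ⁅E 0, E 1⁆ = E 1) (b02 : ⁅E 0, E 2⁆ = -E 2)
    (b03 : ⁅E 0, E 3⁆ = (-2 : ℝ) • E 3) (b12 : ⁅E 1, E 2⁆ = -E 4)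
    (b04 : ⁅E 0, E 4⁆ = 0) (b13 : ⁅E 1, E 3⁆ = 0) (b14 : ⁅E 1, E 4⁆ = 0)
    (b23 : ⁅E 2, E 3⁆ = 0) (b24 : ⁅E 2, E 4⁆ = 0) (b34 : ⁅E 3, E 4⁆ = 0) :
    Module.finrank ℝ (Hdef H 1 (fun v => E.repr v 0) 1) = 2 ∧
    ∃ (h12 : w2 (fun v => E.repr v 0) (fun v => E.repr v 1) ∈
        Zdef H 1 (fun v => E.repr v 0) 2)
      (h25 : w2 (fun v => E.repr v 1) (fun v => E.repr v 4) ∈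
        Zdef H 1 (fun v => E.repr v 0) 2),
      Submodule.span ℝ
        ({Submodule.Quotient.mk
            (⟨w2 (fun v => E.repr v 0) (fun v => E.repr v 1), h12⟩ :
              Zdef H 1 (fun v => E.repr v 0) 2),
          Submodule.Quotient.mk
            (⟨w2 (fun v => E.repr v 1) (fun v => E.repr v 4), h25⟩ :
              Zdef H 1 (fun v => E.repr v 0) 2)} :
          Set (Hdef H 1 (fun v => E.repr v 0) 1)) = ⊤ := by
  have hE : IsHBasis E := ⟨b01, b02, b03, b12, b04, b13, b14, b23, b24, b34⟩
  let Z := Zdef H 1 (fun v => E.repr v 0) 2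
  let Φ : Z →ₗ[ℝ] ℝ × ℝ :=
    ((LinearMap.proj ![E 0, E 1]).prod (LinearMap.proj ![E 1, E 4])) ∘ₗ Z.subtype
  have hker : LinearMap.ker Φ = Submodule.comap Z.subtype (Bdef H 1 (fun v => E.repr v 0) 1) := by
    ext ⟨θ, hθ⟩
    change (θ ![E 0, E 1], θ ![E 1, E 4]) = 0 ↔ θ ∈ Bdef H 1 (fun v => E.repr v 0) 1
    rw [Prod.mk_eq_zero]
    exact ⟨fun h => hE.mem_Bdef_of_mem_Zdef hθ h.1 h.2, hE.apply_eq_zero_of_mem_Bdef⟩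
  let z₁ : Z := ⟨_, hE.w2_zero_one_mem_Zdef⟩
  let z₂ : Z := ⟨_, hE.w2_one_four_mem_Zdef⟩
  have hspan : Submodule.span ℝ (Φ '' {z₁, z₂}) = ⊤ := by
    have hz₁ : Φ z₁ = (1, 0) := by simp [Φ, z₁, w2]
    have hz₂ : Φ z₂ = (0, 1) := by simp [Φ, z₂, w2]
    rw [Set.image_pair, hz₁, hz₂]
    exact Submodule.eq_top_iff'.2 fun ⟨a, b⟩ => Submodule.mem_span_pair.2 ⟨a, b, by simp⟩
  refine ⟨?_, hE.w2_zero_one_mem_Zdef, hE.w2_one_four_mem_Zdef, ?_⟩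
  · rw [Submodule.finrank_quotient_of_ker_eq hker hspan]
    simp
  · simpa [Set.image_pair] using Submodule.span_image_mkQ_eq_top_of_ker_eq hker hspan
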